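/- arXiv:1602.04270 — 5 statements merged into one kernel-verified Lean document; each statement's English description precedes it below -/
import Mathlib

section
/- Let a, b, c : Fin m → Bool be binary strings with c(s) ∈ {a(s), b(s)} for every site s (the child haplotype c is Mendelian consistent with parent haplotypes a, b). Call σ : Fin m → Fin 2 a valid origin sequence if c(s) = a(s) whenever σ(s) = 1 and c(s) = b(s) whenever σ(s) = 2. Let t_1 < t_2 < ... < t_r be the sites where a(t) ≠ b(t) (the parent's heterozygous sites), and for each j let f(j) ∈ {1,2} be the unique origin forced at t_j (f(j)=1 if c(t_j)=a(t_j), else f(j)=2). Then the minimum over all valid origin sequences σ of the number of s with σ(s) ≠ σ(s+1) equals the number of indices j ∈ {1,...,r−1} with f(j) ≠ f(j+1). -/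
/-- `σ` is a valid origin sequence for inheriting child haplotype `c` from parent
haplotypes `(a, b)`: origin `0` means the allele comes from `a`, origin `1` from `b`. -/
def IsValidOrigin {n : ℕ} (a b c : Fin (n + 1) → Bool) (σ : Fin (n + 1) → Fin 2) : Prop :=
  ∀ s, (σ s = 0 → c s = a s) ∧ (σ s = 1 → c s = b s)

/-- Number of recombinations in the origin sequence `σ`. -/
def nRecomb {n : ℕ} (σ : Fin (n + 1) → Fin 2) : ℕ :=
  (Finset.univ.filter fun j : Fin n => σ j.castSucc ≠ σ j.succ).card

/-!
At a heterozygous site of the parent the origin is forced; elsewhere it is free. Between two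
successive heterozygous sites with different forced origins every valid origin sequence must
switch, and distinct such pairs span disjoint sets of steps, which gives the lower bound. Copying
the forced origin of the last heterozygous site at or before each site (of the first one, before
it) switches only at such pairs, which gives the upper bound.
-/

open Finset

theorem Fin.exists_castSucc_ne_succ_of_ne {n : ℕ} {α : Type*} (σ : Fin (n + 1) → α)
    {p q : Fin (n + 1)} (hpq : p ≤ q) (hne : σ p ≠ σ q) :
    ∃ j : Fin n, p ≤ j.castSucc ∧ j.succ ≤ q ∧ σ j.castSucc ≠ σ j.succ := by
  by_contra! hconst
  suffices ∀ r, p ≤ r → r ≤ q → σ p = σ r from hne (this q hpq le_rfl)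
  refine Fin.induction ?_ fun i ih hpi hiq => ?_
  · intro hp _
    rw [le_antisymm hp (Fin.zero_le p)]
  rcases hpi.eq_or_lt with rfl | hlt
  · rfl
  have hpi' : p ≤ i.castSucc := Fin.le_castSucc_iff.2 hlt
  exact (ih hpi' (Fin.castSucc_lt_succ.le.trans hiq)).trans (hconst i hpi' hiq)

namespace OriginSequence

variable {n : ℕ}

def consecutivePairs (S : Finset (Fin (n + 1))) : Finset (Fin (n + 1) × Fin (n + 1)) :=
  univ.filter fun pq =>
    pq.1 ∈ S ∧ pq.2 ∈ S ∧ pq.1 < pq.2 ∧ ∀ u, pq.1 < u → u < pq.2 → u ∉ S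

theorem eq_of_mem_consecutivePairs {S : Finset (Fin (n + 1))} {pq pq' : Fin (n + 1) × Fin (n + 1)}
    (h : pq ∈ consecutivePairs S) (h' : pq' ∈ consecutivePairs S) {j : Fin n}
    (hj : pq.1 ≤ j.castSucc ∧ j.succ ≤ pq.2)
    (hj' : pq'.1 ≤ j.castSucc ∧ j.succ ≤ pq'.2) :
    pq = pq' := by
  simp only [consecutivePairs, mem_filter, mem_univ, true_and] at h h'
  obtain ⟨hp, hq, -, hgap⟩ := h
  obtain ⟨hp', hq', -, hgap'⟩ := h'
  have hstep : j.castSucc < j.succ := Fin.castSucc_lt_succ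
  apply Prod.ext <;> refine le_antisymm (not_lt.1 fun hlt => ?_) (not_lt.1 fun hlt => ?_)
  · exact hgap' _ hlt (hj.1.trans_lt (hstep.trans_le hj'.2)) hp
  · exact hgap _ hlt (hj'.1.trans_lt (hstep.trans_le hj.2)) hp'
  · exact hgap _ (hj.1.trans_lt (hstep.trans_le hj'.2)) hlt hq'
  · exact hgap' _ (hj'.1.trans_lt (hstep.trans_le hj.2)) hlt hq

theorem card_consecutivePairs_ne_le_nRecomb {S : Finset (Fin (n + 1))}
    {τ σ : Fin (n + 1) → Fin 2} (hσ : ∀ s ∈ S, σ s = τ s) :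
    ((consecutivePairs S).filter fun pq => τ pq.1 ≠ τ pq.2).card ≤ nRecomb σ := by
  refine card_le_card_of_forall_subsingleton
    (fun pq (j : Fin n) => pq.1 ≤ j.castSucc ∧ j.succ ≤ pq.2) (fun pq hpq => ?_) ?_
  · simp only [consecutivePairs, mem_filter, mem_univ, true_and] at hpq
    obtain ⟨⟨hp, hq, hlt, -⟩, hne⟩ := hpq
    obtain ⟨j, hj⟩ := Fin.exists_castSucc_ne_succ_of_ne σ hlt.le (by rwa [hσ _ hp, hσ _ hq])
    exact ⟨j, by simpa [nRecomb] using hj.2.2, hj.1, hj.2.1⟩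
  · intro j _ pq hpq pq' hpq'
    exact eq_of_mem_consecutivePairs (mem_filter.1 hpq.1).1 (mem_filter.1 hpq'.1).1 hpq.2 hpq'.2

/-- Before the first element of `S` this is that first element, so that `τ ∘ prevIn S` does not
switch there. -/
noncomputable def prevIn (S : Finset (Fin (n + 1))) (s : Fin (n + 1)) : Fin (n + 1) :=
  if h : (S.filter (· ≤ s)).Nonempty then (S.filter (· ≤ s)).max' h
  else if hS : S.Nonempty then S.min' hS else 0

theorem prevIn_of_mem {S : Finset (Fin (n + 1))} {s : Fin (n + 1)} (hs : s ∈ S) :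
    prevIn S s = s := by
  have hmem : s ∈ S.filter (· ≤ s) := mem_filter.2 ⟨hs, le_rfl⟩
  rw [prevIn, dif_pos ⟨s, hmem⟩]
  exact le_antisymm (max'_le _ _ _ fun t ht => (mem_filter.1 ht).2) (le_max' _ _ hmem)

theorem prevIn_mem_consecutivePairs {S : Finset (Fin (n + 1))} {j : Fin n}
    (h : prevIn S j.castSucc ≠ prevIn S j.succ) :
    (prevIn S j.castSucc, j.succ) ∈ consecutivePairs S := by
  have hsucc : j.succ ∈ S := by
    by_contra hj
    refine h ?_
    have : S.filter (· ≤ j.castSucc) = S.filter (· ≤ j.succ) := by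
      refine filter_congr fun t ht => ?_
      rw [Fin.le_castSucc_iff, le_iff_lt_or_eq, or_iff_left (ne_of_mem_of_not_mem ht hj)]
    simp only [prevIn, this]
  have hbefore : (S.filter (· ≤ j.castSucc)).Nonempty := by
    by_contra hempty
    refine h ?_
    have hmin : S.min' ⟨_, hsucc⟩ = j.succ := by
      refine le_antisymm (min'_le _ _ hsucc) (le_min' _ _ _ fun t ht => ?_)
      by_contra! hlt
      exact hempty ⟨t, mem_filter.2 ⟨ht, Fin.le_castSucc_iff.2 hlt⟩⟩
    rw [prevIn_of_mem hsucc, prevIn, dif_neg hempty, dif_pos ⟨_, hsucc⟩, hmin]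
  have hprev : prevIn S j.castSucc = (S.filter (· ≤ j.castSucc)).max' hbefore := dif_pos hbefore
  obtain ⟨hpS, hpj⟩ := mem_filter.1 (hprev ▸ max'_mem _ hbefore)
  simp only [consecutivePairs, mem_filter, mem_univ, true_and]
  refine ⟨hpS, hsucc, Fin.le_castSucc_iff.1 hpj, fun u hpu huj hu => ?_⟩
  have : u ≤ prevIn S j.castSucc :=
    hprev ▸ le_max' _ _ (mem_filter.2 ⟨hu, Fin.le_castSucc_iff.2 huj⟩)
  exact this.not_gt hpu

theorem exists_nRecomb_le_card_consecutivePairs_ne (S : Finset (Fin (n + 1)))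
    (τ : Fin (n + 1) → Fin 2) : ∃ σ : Fin (n + 1) → Fin 2, (∀ s ∈ S, σ s = τ s) ∧
      nRecomb σ ≤ ((consecutivePairs S).filter fun pq => τ pq.1 ≠ τ pq.2).card := by
  refine ⟨τ ∘ prevIn S, fun s hs => congrArg τ (prevIn_of_mem hs), ?_⟩
  refine card_le_card_of_injOn (fun j => (prevIn S j.castSucc, j.succ)) (fun j hj => ?_)
    fun j _ j' _ hjj' => Fin.succ_injective _ (Prod.ext_iff.1 hjj').2
  have hne : τ (prevIn S j.castSucc) ≠ τ (prevIn S j.succ) := (mem_filter.1 hj).2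
  have hpair := prevIn_mem_consecutivePairs (S := S) (j := j) fun h => hne (congrArg τ h)
  rw [prevIn_of_mem (mem_filter.1 hpair).2.2.1] at hne
  exact mem_filter.2 ⟨hpair, hne⟩

def hetSites (a b : Fin (n + 1) → Bool) : Finset (Fin (n + 1)) :=
  univ.filter fun s => a s ≠ b s

def forcedOrigin (a c : Fin (n + 1) → Bool) (s : Fin (n + 1)) : Fin 2 :=
  if c s = a s then 0 else 1

theorem isValidOrigin_iff {a b c : Fin (n + 1) → Bool} (hc : ∀ s, c s = a s ∨ c s = b s)
    {σ : Fin (n + 1) → Fin 2} :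
    IsValidOrigin a b c σ ↔ ∀ s ∈ hetSites a b, σ s = forcedOrigin a c s := by
  have site : ∀ x y z : Bool, ∀ o : Fin 2, (z = x ∨ z = y) →
      (((o = 0 → z = x) ∧ (o = 1 → z = y)) ↔ (x ≠ y → o = if z = x then 0 else 1)) := by
    decide
  simp only [IsValidOrigin, hetSites, forcedOrigin, mem_filter, mem_univ, true_and]
  exact forall_congr' fun s => site _ _ _ _ (hc s)

theorem filter_consecutivePairs_hetSites (a b c : Fin (n + 1) → Bool) :
    (univ.filter fun pq : Fin (n + 1) × Fin (n + 1) =>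
        pq.1 < pq.2 ∧ a pq.1 ≠ b pq.1 ∧ a pq.2 ≠ b pq.2 ∧
        (∀ u, pq.1 < u → u < pq.2 → a u = b u) ∧
        ¬((c pq.1 = a pq.1) ↔ (c pq.2 = a pq.2))) =
      (consecutivePairs (hetSites a b)).filter
        fun pq => forcedOrigin a c pq.1 ≠ forcedOrigin a c pq.2 := by
  ext ⟨p, q⟩
  simp only [consecutivePairs, hetSites, forcedOrigin, mem_filter, mem_univ, true_and, not_not]
  split_ifs <;> simp_all [and_comm, and_left_comm]

end OriginSequence

open OriginSequence

/-- the minimum number of recombinations over valid origin sequences equals the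
number of pairs of consecutive heterozygous sites of the parent on which the forced origin
changes. -/
theorem stmt3 (n : ℕ) (a b c : Fin (n + 1) → Bool)
    (hc : ∀ s, c s = a s ∨ c s = b s) :
    sInf {k | ∃ σ : Fin (n + 1) → Fin 2, IsValidOrigin a b c σ ∧ nRecomb σ = k} =
      (Finset.univ.filter fun pq : Fin (n + 1) × Fin (n + 1) =>
        pq.1 < pq.2 ∧ a pq.1 ≠ b pq.1 ∧ a pq.2 ≠ b pq.2 ∧
        (∀ u, pq.1 < u → u < pq.2 → a u = b u) ∧
        ¬((c pq.1 = a pq.1) ↔ (c pq.2 = a pq.2))).card := by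
  rw [filter_consecutivePairs_hetSites]
  obtain ⟨σ₀, hσ₀, hcount⟩ :=
    exists_nRecomb_le_card_consecutivePairs_ne (hetSites a b) (forcedOrigin a c)
  have hvalid₀ : IsValidOrigin a b c σ₀ := (isValidOrigin_iff hc).2 hσ₀
  refine le_antisymm (le_trans (Nat.sInf_le ⟨σ₀, hvalid₀, rfl⟩) hcount) ?_
  refine le_csInf ⟨nRecomb σ₀, σ₀, hvalid₀, rfl⟩ ?_
  rintro k ⟨σ, hσ, rfl⟩
  exact card_consecutivePairs_ne_le_nRecomb ((isValidOrigin_iff hc).1 hσ)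
end

section
/- With the setup of the previous statement (parent haplotypes a, b, child haplotype c with c(s) ∈ {a(s), b(s)} for all s, and forced origins f(1),...,f(r) at the parent's heterozygous sites t_1 < ... < t_r): if σ is a valid origin sequence achieving the minimum number of recombinations and σ has a recombination between positions q and q+1 with t_j ≤ q < q+1 ≤ t_{j+1} for some j with f(j) ≠ f(j+1), then for every q' with t_j ≤ q' < t_{j+1} there exists a valid origin sequence σ' with the same total number of recombinations that has a recombination between q' and q'+1 and agrees with σ outside the interval (t_j, t_{j+1}). -/
namespace IsValidOrigin

variable {n : ℕ} {a b c : Fin (n + 1) → Bool} {σ τ : Fin (n + 1) → Fin 2}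

theorem eq_zero_iff (hσ : IsValidOrigin a b c σ) {u : Fin (n + 1)} (hu : a u ≠ b u) :
    σ u = 0 ↔ c u = a u := by
  refine ⟨(hσ u).1, fun hca => ?_⟩
  by_contra h0
  exact hu (hca ▸ (hσ u).2 (Fin.eq_one_of_ne_zero _ h0))

theorem of_ne_imp_homozygous (hc : ∀ s, c s = a s ∨ c s = b s) (hσ : IsValidOrigin a b c σ)
    (h : ∀ s, τ s ≠ σ s → a s = b s) : IsValidOrigin a b c τ := by
  intro s
  by_cases hs : τ s = σ s
  · rw [hs]
    exact hσ s
  · have hab := h s hs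
    have hca : c s = a s := (hc s).elim id (·.trans hab.symm)
    exact ⟨fun _ => hca, fun _ => hab ▸ hca⟩

end IsValidOrigin

section Recombination

variable {n : ℕ} {β : Type*}

def recombSites [DecidableEq β] (σ : Fin (n + 1) → β) : Finset (Fin n) :=
  Finset.univ.filter fun j => σ j.castSucc ≠ σ j.succ

theorem nRecomb_eq_card_recombSites (σ : Fin (n + 1) → Fin 2) :
    nRecomb σ = (recombSites σ).card :=
  rfl

@[simp]
theorem mem_recombSites [DecidableEq β] {σ : Fin (n + 1) → β} {j : Fin n} :
    j ∈ recombSites σ ↔ σ j.castSucc ≠ σ j.succ := by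
  simp [recombSites]

/-- The gaps `j, j + 1` lying in the closed interval `[i, k]`. -/
def window (i k : Fin (n + 1)) : Finset (Fin n) :=
  Finset.univ.filter fun j => i ≤ j.castSucc ∧ j.succ ≤ k

@[simp]
theorem mem_window {i k : Fin (n + 1)} {j : Fin n} :
    j ∈ window i k ↔ i ≤ j.castSucc ∧ j.succ ≤ k := by
  simp [window]

theorem recombSites_sdiff_window_eq [DecidableEq β] {σ τ : Fin (n + 1) → β} {i k : Fin (n + 1)}
    (hτ : ∀ s, (s ≤ i ∨ k ≤ s) → τ s = σ s) :
    recombSites τ \ window i k = recombSites σ \ window i k := by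
  ext j
  simp only [Finset.mem_sdiff, mem_recombSites, mem_window, not_and_or, not_le]
  refine and_congr_left fun hj => ?_
  have hout : (j.castSucc ≤ i ∧ j.succ ≤ i) ∨ (k ≤ j.castSucc ∧ k ≤ j.succ) := by
    simp only [Fin.le_def, Fin.lt_def, Fin.val_castSucc, Fin.val_succ] at hj ⊢
    omega
  rcases hout with ⟨h₀, h₁⟩ | ⟨h₀, h₁⟩
  · rw [hτ _ (.inl h₀), hτ _ (.inl h₁)]
  · rw [hτ _ (.inr h₀), hτ _ (.inr h₁)]

theorem card_recombSites_le_of_eqOn_compl [DecidableEq β] {σ τ : Fin (n + 1) → β}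
    {i k : Fin (n + 1)} {q : Fin n}
    (hτ : ∀ s, (s ≤ i ∨ k ≤ s) → τ s = σ s) (hτw : (recombSites τ ∩ window i k).card ≤ 1)
    (hq : q ∈ recombSites σ ∩ window i k) :
    (recombSites τ).card ≤ (recombSites σ).card := by
  rw [← Finset.card_inter_add_card_sdiff (recombSites τ) (window i k),
    ← Finset.card_inter_add_card_sdiff (recombSites σ) (window i k),
    recombSites_sdiff_window_eq hτ]
  have := Finset.card_pos.mpr ⟨q, hq⟩
  omega

def shiftRecomb (σ : Fin (n + 1) → β) (i k : Fin (n + 1)) (q : Fin n) : Fin (n + 1) → β :=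
  fun s => if i < s ∧ s < k then (if s ≤ q.castSucc then σ i else σ k) else σ s

variable {σ : Fin (n + 1) → β} {i k : Fin (n + 1)} {q : Fin n}

theorem lt_and_lt_of_shiftRecomb_ne {s : Fin (n + 1)} (h : shiftRecomb σ i k q s ≠ σ s) :
    i < s ∧ s < k := by
  by_contra hs
  exact h (if_neg hs)

theorem shiftRecomb_of_le_or_le {s : Fin (n + 1)} (hs : s ≤ i ∨ k ≤ s) :
    shiftRecomb σ i k q s = σ s := by
  by_contra h
  obtain ⟨h₁, h₂⟩ := lt_and_lt_of_shiftRecomb_ne h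
  rcases hs with h | h
  · exact (h₁.trans_le h).false
  · exact (h₂.trans_le h).false

theorem shiftRecomb_of_mem_Icc (hiq : i ≤ q.castSucc) (hqk : q.castSucc < k) {s : Fin (n + 1)}
    (his : i ≤ s) (hsk : s ≤ k) :
    shiftRecomb σ i k q s = if s ≤ q.castSucc then σ i else σ k := by
  rcases his.lt_or_eq with his | rfl
  · rcases hsk.lt_or_eq with hsk | rfl
    · simp only [shiftRecomb, if_pos (And.intro his hsk)]
    · rw [shiftRecomb_of_le_or_le (.inr le_rfl), if_neg hqk.not_ge]
  · rw [shiftRecomb_of_le_or_le (.inl le_rfl), if_pos hiq]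

theorem recombSites_shiftRecomb_inter_window [DecidableEq β] (hσ : σ i ≠ σ k)
    (hiq : i ≤ q.castSucc) (hqk : q.castSucc < k) :
    recombSites (shiftRecomb σ i k q) ∩ window i k = {q} := by
  ext j
  simp only [Finset.mem_inter, mem_recombSites, mem_window, Finset.mem_singleton]
  have hq : (i : ℕ) ≤ q ∧ (q : ℕ) < k := by
    simpa only [Fin.le_def, Fin.lt_def, Fin.val_castSucc] using And.intro hiq hqk
  constructor
  · rintro ⟨hj, hij, hjk⟩
    have hij' : i ≤ j.succ := hij.trans (Fin.castSucc_le_succ j)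
    have hjk' : j.castSucc ≤ k := (Fin.castSucc_le_succ j).trans hjk
    rw [shiftRecomb_of_mem_Icc hiq hqk hij hjk', shiftRecomb_of_mem_Icc hiq hqk hij' hjk] at hj
    by_contra hjq
    have hjq' : (j : ℕ) ≠ q := fun h => hjq (Fin.ext h)
    simp only [Fin.le_def, Fin.val_castSucc, Fin.val_succ] at hj
    split_ifs at hj <;> first | exact hj rfl | omega
  · intro hj
    subst j
    have hsk : q.succ ≤ k := by
      simp only [Fin.le_def, Fin.val_succ]
      omega
    have hiq' : i ≤ q.succ := hiq.trans (Fin.castSucc_le_succ q)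
    refine ⟨?_, hiq, hsk⟩
    rw [shiftRecomb_of_mem_Icc hiq hqk hiq hqk.le, shiftRecomb_of_mem_Icc hiq hqk hiq' hsk,
      if_pos le_rfl, if_neg Fin.castSucc_lt_succ.not_ge]
    exact hσ

end Recombination

theorem stmt4_general (n : ℕ) (a b c : Fin (n + 1) → Bool)
    (hc : ∀ s, c s = a s ∨ c s = b s)
    (σ : Fin (n + 1) → Fin 2) (hσ : IsValidOrigin a b c σ)
    (hmin : ∀ σ' : Fin (n + 1) → Fin 2, IsValidOrigin a b c σ' → nRecomb σ ≤ nRecomb σ')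
    (tj tj1 : Fin (n + 1))
    (hhet1 : a tj ≠ b tj) (hhet2 : a tj1 ≠ b tj1)
    (hcons : ∀ u, tj < u → u < tj1 → a u = b u)
    (hforced : ¬((c tj = a tj) ↔ (c tj1 = a tj1)))
    (q : Fin n) (hrec : σ q.castSucc ≠ σ q.succ)
    (hq1 : tj ≤ q.castSucc) (hq2 : q.succ ≤ tj1) :
    ∀ q' : Fin n, tj ≤ q'.castSucc → q'.castSucc < tj1 →
      ∃ σ' : Fin (n + 1) → Fin 2, IsValidOrigin a b c σ' ∧
        nRecomb σ' = nRecomb σ ∧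
        σ' q'.castSucc ≠ σ' q'.succ ∧
        ∀ s : Fin (n + 1), (s ≤ tj ∨ tj1 ≤ s) → σ' s = σ s := by
  intro q' hq'1 hq'2
  have hne : σ tj ≠ σ tj1 := fun h =>
    hforced (by rw [← hσ.eq_zero_iff hhet1, ← hσ.eq_zero_iff hhet2, h])
  have hout : ∀ s, (s ≤ tj ∨ tj1 ≤ s) → shiftRecomb σ tj tj1 q' s = σ s :=
    fun _ => shiftRecomb_of_le_or_le
  have hvalid : IsValidOrigin a b c (shiftRecomb σ tj tj1 q') :=
    hσ.of_ne_imp_homozygous hc fun s hs =>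
      (lt_and_lt_of_shiftRecomb_ne hs).elim (hcons s)
  have hwindow := recombSites_shiftRecomb_inter_window hne hq'1 hq'2
  have hle : nRecomb (shiftRecomb σ tj tj1 q') ≤ nRecomb σ := by
    rw [nRecomb_eq_card_recombSites, nRecomb_eq_card_recombSites]
    exact card_recombSites_le_of_eqOn_compl hout (by rw [hwindow, Finset.card_singleton])
      (Finset.mem_inter.mpr ⟨mem_recombSites.mpr hrec, mem_window.mpr ⟨hq1, hq2⟩⟩)
  have hq' : q' ∈ recombSites (shiftRecomb σ tj tj1 q') :=
    (Finset.mem_inter.mp (hwindow ▸ Finset.mem_singleton_self q')).1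
  exact ⟨_, hvalid, le_antisymm hle (hmin _ hvalid), mem_recombSites.mp hq', hout⟩

/-- a recombination of a minimum valid origin sequence lying between two
consecutive heterozygous sites `tj < tj1` of the parent with differing forced origins can be
shifted to any position `q'` in the interval `[tj, tj1)`, keeping validity, the total number
of recombinations, and the values of `σ` outside the open interval `(tj, tj1)`. -/
theorem stmt4 (n : ℕ) (a b c : Fin (n + 1) → Bool)
    (hc : ∀ s, c s = a s ∨ c s = b s)
    (σ : Fin (n + 1) → Fin 2) (hσ : IsValidOrigin a b c σ)
    (hmin : ∀ σ' : Fin (n + 1) → Fin 2, IsValidOrigin a b c σ' → nRecomb σ ≤ nRecomb σ')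
    (tj tj1 : Fin (n + 1)) (htj : tj < tj1)
    (hhet1 : a tj ≠ b tj) (hhet2 : a tj1 ≠ b tj1)
    (hcons : ∀ u, tj < u → u < tj1 → a u = b u)
    (hforced : ¬((c tj = a tj) ↔ (c tj1 = a tj1)))
    (q : Fin n) (hrec : σ q.castSucc ≠ σ q.succ)
    (hq1 : tj ≤ q.castSucc) (hq2 : q.succ ≤ tj1) :
    ∀ q' : Fin n, tj ≤ q'.castSucc → q'.castSucc < tj1 →
      ∃ σ' : Fin (n + 1) → Fin 2, IsValidOrigin a b c σ' ∧
        nRecomb σ' = nRecomb σ ∧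
        σ' q'.castSucc ≠ σ' q'.succ ∧
        ∀ s : Fin (n + 1), (s ≤ tj ∨ tj1 ≤ s) → σ' s = σ s :=
  stmt4_general n a b c hc σ hσ hmin tj tj1 hhet1 hhet2 hcons hforced q hrec hq1 hq2
end

section
/- Let g : Fin m → Fin 3 be a genotype vector with heterozygous sites s_1 < s_2 < ... < s_η (where g(s) = 2), η ≥ 1. For each i ∈ {1,...,η−1}, assign a color c_i ∈ {red, blue}. Then there exists a unique binary string h : Fin m → Bool such that: (1) h(s) = g(s) at every homozygous site s; (2) h(s_1) = 0; and (3) for each i, h(s_i) ≠ h(s_{i+1}) iff c_i = red. Consequently the map c ↦ {h, g − h} is a bijection from {red, blue}^(η−1) to the set of genotype-consistent unordered haplotype pairs for g, where (g − h)(s) is defined as g(s) − h(s) at homozygous sites and 1 − h(s) at heterozygous sites. -/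
/-- The complementary haplotype `g - h`: flip `h` at heterozygous sites, keep it at
homozygous sites. -/
def gMinus {m : ℕ} (g : Fin m → Fin 3) (h : Fin m → Bool) : Fin m → Bool :=
  fun s => if g s = 2 then !(h s) else h s

/-- An ordered pair of haplotypes `(h, h')` is genotype-consistent with `g`. -/
def GenoConsistentPair {m : ℕ} (g : Fin m → Fin 3) (h h' : Fin m → Bool) : Prop :=
  ∀ s, (g s = 0 → h s = false ∧ h' s = false) ∧
       (g s = 1 → h s = true ∧ h' s = true) ∧
       (g s = 2 → h s ≠ h' s)


/-!
On the heterozygous sites a haplotype with allele `0` at `s 0` is the running xor of the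
coloring (`phase`), and at the homozygous sites it is forced by the genotype; so a coloring
determines exactly one such haplotype. Conversely every genotype-consistent pair is
`{h, g - h}` with `h` forced at the homozygous sites, exactly one of its two haplotypes has
allele `0` at `s 0`, and the alternations of that one give back the coloring.
-/

namespace Haplotype

variable {m r : ℕ}

def phase (c : Fin r → Bool) : Fin (r + 1) → Bool :=
  Fin.induction false fun j b => b ^^ c j

@[simp] lemma phase_zero (c : Fin r → Bool) : phase c 0 = false := rfl

@[simp] lemma phase_succ (c : Fin r → Bool) (j : Fin r) :
    phase c j.succ = (phase c j.castSucc ^^ c j) := Fin.induction_succ _ _ j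

lemma phase_castSucc_ne_succ_iff (c : Fin r → Bool) (j : Fin r) :
    phase c j.castSucc ≠ phase c j.succ ↔ c j = true := by
  rw [phase_succ]; cases phase c j.castSucc <;> cases c j <;> decide

lemma eq_phase {c : Fin r → Bool} {p : Fin (r + 1) → Bool} (h0 : p 0 = false)
    (hstep : ∀ j, p j.castSucc ≠ p j.succ ↔ c j = true) : p = phase c := by
  funext i
  induction i using Fin.induction with
  | zero => exact h0
  | succ j ih =>
    rw [phase_succ, ← ih]
    have := hstep j
    revert this
    cases p j.castSucc <;> cases p j.succ <;> cases c j <;> decide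

def RealizesColoring (g : Fin m → Fin 3) (s : Fin (r + 1) → Fin m) (c : Fin r → Bool)
    (h : Fin m → Bool) : Prop :=
  (∀ x, g x ≠ 2 → h x = decide (g x = 1)) ∧ h (s 0) = false ∧
    ∀ j : Fin r, h (s j.castSucc) ≠ h (s j.succ) ↔ c j = true

noncomputable def haplotypeOfColoring (g : Fin m → Fin 3) (s : Fin (r + 1) → Fin m)
    (c : Fin r → Bool) : Fin m → Bool :=
  Function.extend s (phase c) fun x => decide (g x = 1)

variable {g : Fin m → Fin 3} {s : Fin (r + 1) → Fin m}

lemma realizesColoring_iff (hs : Function.Injective s) (hrange : ∀ x, g x = 2 ↔ ∃ i, s i = x)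
    {c : Fin r → Bool} {h : Fin m → Bool} :
    RealizesColoring g s c h ↔ h = haplotypeOfColoring g s c := by
  have hhom : ∀ x, g x ≠ 2 → haplotypeOfColoring g s c x = decide (g x = 1) := fun x hx =>
    Function.extend_apply' _ _ _ fun hx' => hx ((hrange x).2 hx')
  have hhet : ∀ i, haplotypeOfColoring g s c (s i) = phase c i := hs.extend_apply _ _
  constructor
  · rintro ⟨hh, h0, hstep⟩
    have hphase : h ∘ s = phase c := eq_phase h0 hstep
    funext x
    by_cases hx : g x = 2
    · obtain ⟨i, rfl⟩ := (hrange x).1 hx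
      rw [hhet, ← hphase, Function.comp_apply]
    · rw [hh x hx, hhom x hx]
  · rintro rfl
    refine ⟨hhom, ?_, fun j => ?_⟩
    · rw [hhet, phase_zero]
    · rw [hhet, hhet, phase_castSucc_ne_succ_iff]

lemma RealizesColoring.coloring_eq {c : Fin r → Bool} {h : Fin m → Bool}
    (hc : RealizesColoring g s c h) : c = fun j => h (s j.castSucc) != h (s j.succ) := by
  funext j
  rw [Bool.eq_iff_iff, bne_iff_ne, hc.2.2 j]

lemma realizesColoring_bne {h : Fin m → Bool} (hh : ∀ x, g x ≠ 2 → h x = decide (g x = 1))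
    (h0 : h (s 0) = false) :
    RealizesColoring g s (fun j => h (s j.castSucc) != h (s j.succ)) h :=
  ⟨hh, h0, fun j => by rw [bne_iff_ne]⟩

lemma gMinus_apply_of_eq_two {h : Fin m → Bool} {x : Fin m} (hx : g x = 2) :
    gMinus g h x = !h x := if_pos hx

lemma genoConsistentPair_iff {h h' : Fin m → Bool} :
    GenoConsistentPair g h h' ↔
      (∀ x, g x ≠ 2 → h x = decide (g x = 1)) ∧ h' = gMinus g h := by
  simp only [GenoConsistentPair, gMinus, funext_iff, ← forall_and]
  refine forall_congr' fun x => ?_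
  generalize g x = a
  cases h x <;> cases h' x <;> fin_cases a <;> decide

lemma GenoConsistentPair.symm {h h' : Fin m → Bool} (hc : GenoConsistentPair g h h') :
    GenoConsistentPair g h' h := fun x =>
  ⟨fun hx => ((hc x).1 hx).symm, fun hx => ((hc x).2.1 hx).symm, fun hx => ((hc x).2.2 hx).symm⟩

lemma bijOn_haplotypeOfColoring (hs : Function.Injective s)
    (hrange : ∀ x, g x = 2 ↔ ∃ i, s i = x) :
    Set.BijOn (fun c => Sym2.mk (haplotypeOfColoring g s c) (gMinus g (haplotypeOfColoring g s c)))
      Set.univ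
      {q : Sym2 (Fin m → Bool) | ∃ h h', q = Sym2.mk h h' ∧ GenoConsistentPair g h h'} := by
  have hreal (c : Fin r → Bool) : RealizesColoring g s c (haplotypeOfColoring g s c) :=
    (realizesColoring_iff hs hrange).2 rfl
  have hs0 : g (s 0) = 2 := (hrange _).2 ⟨0, rfl⟩
  refine ⟨fun c _ => ⟨_, _, rfl, genoConsistentPair_iff.2 ⟨(hreal c).1, rfl⟩⟩, ?_, ?_⟩
  · intro c _ c' _ heq
    rcases Sym2.eq_iff.1 heq with ⟨hF, -⟩ | ⟨hF, -⟩
    · rw [(hreal c).coloring_eq, (hreal c').coloring_eq, hF]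
    · -- the first haplotype starts with `0` at `s 0`, its complement with `1`
      have := congrFun hF (s 0)
      rw [gMinus_apply_of_eq_two hs0, (hreal c).2.1, (hreal c').2.1] at this
      exact absurd this Bool.false_ne_true
  · rintro _ ⟨h, h', rfl, hc⟩
    -- orient the pair so that its first haplotype starts with `0` at `s 0`
    wlog h0 : h (s 0) = false generalizing h h'
    · have h'0 : h' (s 0) = false := by
        simpa [h0] using ((hc (s 0)).2.2 hs0).symm
      obtain ⟨c, -, hq⟩ := this h' h (GenoConsistentPair.symm hc) h'0
      exact ⟨c, trivial, hq.trans Sym2.eq_swap⟩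
    obtain ⟨hh, rfl⟩ := genoConsistentPair_iff.1 hc
    refine ⟨fun j => h (s j.castSucc) != h (s j.succ), trivial, ?_⟩
    dsimp only
    rw [← (realizesColoring_iff hs hrange).1 (realizesColoring_bne hh h0)]

end Haplotype

open Haplotype in
/-- given a genotype `g` whose heterozygous sites are `s 0 < ... < s r`
(`η = r + 1 ≥ 1`), every red/blue coloring `c` of the consecutive pairs of heterozygous
sites (red = `true` = alternating) determines a unique haplotype `h` with `h = g` at
homozygous sites, `h (s 0) = false`, and alternation at the `j`-th pair iff `c j` is red;
moreover `c ↦ {h, g - h}` is a bijection onto the genotype-consistent unordered pairs. -/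
theorem stmt8 (m r : ℕ) (g : Fin m → Fin 3) (s : Fin (r + 1) → Fin m)
    (hs : StrictMono s) (hrange : ∀ x, g x = 2 ↔ ∃ i, s i = x) :
    (∀ c : Fin r → Bool, ∃! h : Fin m → Bool,
      (∀ x, g x ≠ 2 → h x = decide (g x = 1)) ∧ h (s 0) = false ∧
      (∀ j : Fin r, (h (s j.castSucc) ≠ h (s j.succ)) ↔ c j = true)) ∧
    ∃ F : (Fin r → Bool) → (Fin m → Bool),
      (∀ c : Fin r → Bool,
        (∀ x, g x ≠ 2 → F c x = decide (g x = 1)) ∧ F c (s 0) = false ∧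
        (∀ j : Fin r, (F c (s j.castSucc) ≠ F c (s j.succ)) ↔ c j = true)) ∧
      Set.BijOn (fun c => Sym2.mk (F c) (gMinus g (F c))) Set.univ
        {q : Sym2 (Fin m → Bool) | ∃ h h', q = Sym2.mk h h' ∧ GenoConsistentPair g h h'} := by
  have hreal (c : Fin r → Bool) {h : Fin m → Bool} :
      RealizesColoring g s c h ↔ h = haplotypeOfColoring g s c :=
    realizesColoring_iff hs.injective hrange
  exact ⟨fun c => ⟨_, (hreal c).2 rfl, fun h hh => (hreal c).1 hh⟩,
    haplotypeOfColoring g s, fun c => (hreal c).2 rfl,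
    bijOn_haplotypeOfColoring hs.injective hrange⟩
end

section
/- Let a, b, c : Fin m → Bool with c(s) ∈ {a(s), b(s)} for all s, and let s < t be two consecutive heterozygous sites of the parent (a(s) ≠ b(s), a(t) ≠ b(t), and a(u) = b(u) for all s < u < t). Then every valid origin sequence σ for (a, b, c) has at least one recombination in the interval [s, t) if and only if exactly one of the following holds: c alternates on (s,t) while a does not (c(s) ≠ c(t) and a(s) = a(t)), or c does not alternate while a does (c(s) = c(t) and a(s) ≠ a(t)). -/
/-! At a heterozygous site every valid origin sequence takes the value `forcedOrigin a c`;
at a homozygous site any origin is valid. So a recombination in `[s, t)` is forced exactly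
when the forced origins at `s` and `t` differ. -/

theorem Fin.apply_eq_of_forall_castSucc_eq_succ {n : ℕ} {α : Type*} (f : Fin (n + 1) → α)
    {s t : Fin (n + 1)}
    (h : ∀ q : Fin n, s ≤ q.castSucc → q.castSucc < t → f q.castSucc = f q.succ) :
    ∀ u, s ≤ u → u ≤ t → f u = f s := by
  refine Fin.induction (fun hs _ => by rw [le_antisymm hs (Fin.zero_le s)]) ?_
  intro q ih hs ht
  rcases eq_or_lt_of_le hs with rfl | hlt
  · rfl
  have hq : q.castSucc < t := Fin.castSucc_lt_succ.trans_le ht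
  rw [← h q (Fin.le_castSucc_iff.mpr hlt) hq, ih (Fin.le_castSucc_iff.mpr hlt) hq.le]

section Origin

variable {ι : Type*}

def forcedOrigin (a c : ι → Bool) (u : ι) : Fin 2 :=
  if c u = a u then 0 else 1

theorem forcedOrigin_eq_forcedOrigin_iff (a c : ι → Bool) (s t : ι) :
    forcedOrigin a c s = forcedOrigin a c t ↔ (c s = c t ↔ a s = a t) := by
  unfold forcedOrigin
  cases c s <;> cases c t <;> cases a s <;> cases a t <;> decide

end Origin

theorem isValidOrigin_iff {n : ℕ} {a b c : Fin (n + 1) → Bool}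
    (hc : ∀ s, c s = a s ∨ c s = b s)
    (σ : Fin (n + 1) → Fin 2) :
    IsValidOrigin a b c σ ↔ ∀ u, a u ≠ b u → σ u = forcedOrigin a c u := by
  refine ⟨fun hσ u hu => ?_, fun h u => ?_⟩
  · unfold forcedOrigin
    rcases Fin.exists_fin_two.mp ⟨σ u, rfl⟩ with h0 | h1
    · rw [h0, if_pos ((hσ u).1 h0)]
    · rw [h1, if_neg (((hσ u).2 h1).symm ▸ hu.symm)]
  · by_cases hu : a u = b u
    · have : c u = a u := (hc u).elim id (· ▸ hu.symm)
      exact ⟨fun _ => this, fun _ => this.trans hu⟩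
    · rw [h u hu, forcedOrigin]
      split_ifs with hca
      · exact ⟨fun _ => hca, fun h => absurd h (by decide)⟩
      · exact ⟨fun h => absurd h (by decide), fun _ => ((hc u).resolve_left hca)⟩

theorem exists_isValidOrigin_eq_on_Icc {n : ℕ} {a b c : Fin (n + 1) → Bool}
    (hc : ∀ s, c s = a s ∨ c s = b s) {s t : Fin (n + 1)}
    (hcons : ∀ u, s < u → u < t → a u = b u)
    (hst : forcedOrigin a c s = forcedOrigin a c t) :
    ∃ σ, IsValidOrigin a b c σ ∧ ∀ u, s ≤ u → u ≤ t → σ u = forcedOrigin a c s := by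
  refine ⟨fun u => if s ≤ u ∧ u ≤ t then forcedOrigin a c s else forcedOrigin a c u,
    (isValidOrigin_iff hc _).mpr fun u hu => ?_, fun u hs ht => if_pos ⟨hs, ht⟩⟩
  split_ifs with hIcc
  · rcases eq_or_lt_of_le hIcc.1 with rfl | hsu
    · rfl
    rcases eq_or_lt_of_le hIcc.2 with rfl | hut
    · exact hst
    · exact absurd (hcons u hsu hut) hu
  · rfl

/-- for consecutive heterozygous sites `s < t` of the parent, every valid
origin sequence has a recombination in `[s, t)` iff exactly one of the following holds: the
child alternates on `(s, t)` while the parent haplotype `a` does not, or the child does not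
alternate while `a` does. -/
theorem stmt12 (n : ℕ) (a b c : Fin (n + 1) → Bool)
    (hc : ∀ s, c s = a s ∨ c s = b s)
    (s t : Fin (n + 1)) (hst : s < t)
    (hhets : a s ≠ b s) (hhett : a t ≠ b t)
    (hcons : ∀ u, s < u → u < t → a u = b u) :
    (∀ σ : Fin (n + 1) → Fin 2, IsValidOrigin a b c σ →
        ∃ q : Fin n, s ≤ q.castSucc ∧ q.castSucc < t ∧ σ q.castSucc ≠ σ q.succ) ↔
      ((c s ≠ c t ∧ a s = a t) ∨ (c s = c t ∧ a s ≠ a t)) := by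
  rw [show _ ∨ _ ↔ forcedOrigin a c s ≠ forcedOrigin a c t by
    simp only [ne_eq, forcedOrigin_eq_forcedOrigin_iff]; tauto]
  constructor
  · intro hall heq
    obtain ⟨σ, hσ, hconst⟩ := exists_isValidOrigin_eq_on_Icc hc hcons heq
    obtain ⟨q, hsq, hqt, hrecomb⟩ := hall σ hσ
    exact hrecomb <| (hconst _ hsq hqt.le).trans
      (hconst _ (hsq.trans Fin.castSucc_lt_succ.le) (Fin.castSucc_lt_iff_succ_le.mp hqt)).symm
  · intro hne σ hσ
    by_contra! hnone
    have hforced := (isValidOrigin_iff hc σ).mp hσ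
    have hconst := Fin.apply_eq_of_forall_castSucc_eq_succ σ hnone t hst.le le_rfl
    exact hne <| (hforced s hhets).symm.trans <| hconst.symm.trans (hforced t hhett)
end

section
/- Let G be a finite graph with vertex set V, let F ⊆ V × Bool be a set of 'forced color' constraints, and build G' by adding two new vertices v_r, v_b joined by an edge, and, for each (v, red) ∈ F, an edge {v, v_b}, and for each (v, blue) ∈ F, an edge {v, v_r} (all edges negative, i.e., an edge disagrees when its endpoints get the same color). Then for every k: G admits a 2-coloring with at most k disagreeing edges that additionally assigns every forced vertex its forced color, if and only if G' admits a 2-coloring with at most k disagreeing edges none of which is one of the newly added edges. -/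
/-!
Identify red with `true`. A forced colouring `φ` of `G` extends to `G'` by colouring `v_r` red
and `v_b` blue. Conversely, the two colours play symmetric roles, so `xor`-ing a colouring `ψ`
of `G'` with the colour of `v_b` keeps every monochromatic edge of `G` and makes `v_r` red and
`v_b` blue; a vertex then disagrees with the terminal of colour `!c` exactly when it has colour `c`.
-/

def monochromaticEdges {V E : Type*} [Fintype E] (ends : E → V × V) (c : V → Bool) : Finset E :=
  Finset.univ.filter fun e => c (ends e).1 = c (ends e).2

theorem monochromaticEdges_xor {V E : Type*} [Fintype E] (ends : E → V × V) (c : V → Bool)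
    (s : Bool) : monochromaticEdges ends (fun v => c v ^^ s) = monochromaticEdges ends c := by
  simp only [monochromaticEdges, Bool.xor_left_inj]

theorem Bool.xor_apply_false_of_ne {f : Bool → Bool} (hf : f true ≠ f false) (c : Bool) :
    (f c ^^ f false) = c := by
  cases c
  · exact Bool.xor_self _
  · exact Bool.xor_iff_ne.2 hf

theorem stmt14_general (V E : Type) [Fintype E]
    (ends : E → V × V) (F : Finset (V × Bool)) (k : ℕ) :
    (∃ φ : V → Bool,
        (Finset.univ.filter fun e : E => φ (ends e).1 = φ (ends e).2).card ≤ k ∧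
        ∀ p ∈ F, φ p.1 = p.2) ↔
      (∃ ψ : V ⊕ Bool → Bool,
        (Finset.univ.filter fun e : E =>
            ψ (Sum.inl (ends e).1) = ψ (Sum.inl (ends e).2)).card ≤ k ∧
        ψ (Sum.inr true) ≠ ψ (Sum.inr false) ∧
        ∀ p ∈ F, ψ (Sum.inl p.1) ≠ ψ (Sum.inr (!p.2))) := by
  constructor
  · rintro ⟨φ, hk, hF⟩
    refine ⟨Sum.elim φ id, hk, by simp, fun p hp => ?_⟩
    simp [hF p hp]
  · rintro ⟨ψ, hk, hrb, hF⟩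
    have hterminal := Bool.xor_apply_false_of_ne (f := ψ ∘ Sum.inr) hrb
    refine ⟨fun v => ψ (Sum.inl v) ^^ ψ (Sum.inr false), ?_, fun p hp => ?_⟩
    · exact (congrArg Finset.card (monochromaticEdges_xor ends (ψ ∘ Sum.inl) _)).le.trans hk
    · rw [← Bool.ne_not, ← hterminal (!p.2)]
      exact mt Bool.xor_left_inj.1 (hF p hp)

/-- the forced-color gadget.  `G` is an all-negative graph (edge set `E` with
endpoint map `ends`; an edge disagrees with a 2-coloring when its endpoints get the same
color), and `F` is a set of forced-color constraints (red = `true`, blue = `false`).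
The gadget graph `G'` adds two vertices `v_r = Sum.inr true` and `v_b = Sum.inr false`
joined by an edge, an edge `{v, v_b}` for each `(v, red) ∈ F` and an edge `{v, v_r}` for
each `(v, blue) ∈ F`.  Then `G` has a 2-coloring with at most `k` disagreeing edges
respecting all forced colors iff `G'` has a 2-coloring with at most `k` disagreeing edges
none of which is a newly added edge. -/
theorem stmt14 (V E : Type) [Fintype V] [Fintype E] [DecidableEq V] [DecidableEq E]
    (ends : E → V × V) (F : Finset (V × Bool)) (k : ℕ) :
    (∃ φ : V → Bool,
        (Finset.univ.filter fun e : E => φ (ends e).1 = φ (ends e).2).card ≤ k ∧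
        ∀ p ∈ F, φ p.1 = p.2) ↔
      (∃ ψ : V ⊕ Bool → Bool,
        (Finset.univ.filter fun e : E =>
            ψ (Sum.inl (ends e).1) = ψ (Sum.inl (ends e).2)).card ≤ k ∧
        ψ (Sum.inr true) ≠ ψ (Sum.inr false) ∧
        ∀ p ∈ F, ψ (Sum.inl p.1) ≠ ψ (Sum.inr (!p.2))) :=
  stmt14_general V E ends F k
end
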